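/- arXiv:1903.09576 — 2 statements merged into one kernel-verified Lean document; each statement's English description precedes it below -/
import Mathlib

section
/- Let C_0 ∈ ℝ^{n×n} and C_e ∈ ℝ^{m×m} be symmetric positive definite, H ∈ ℝ^{m×n}, and let α_1, …, α_{N_a} > 0 satisfy Σ_{k=1}^{N_a} α_k^{−1} = 1. Define recursively C_k = C_{k−1} − C_{k−1} Hᵀ (H C_{k−1} Hᵀ + α_k C_e)^{−1} H C_{k−1} for k = 1, …, N_a. Then each C_k is symmetric positive definite and C_{N_a} = (C_0^{−1} + Hᵀ C_e^{−1} H)^{−1} = C_0 − C_0 Hᵀ (H C_0 Hᵀ + C_e)^{−1} H C_0; that is, N_a multiple-data-assimilation covariance updates with inflation coefficients α_k summing inversely to one yield exactly the covariance of a single Kalman (Bayesian linear-Gaussian) update with the uninflated data-error covariance C_e. -/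
/-!
By the Woodbury identity, an ES-MDA step with inflation `α` is the Kalman update with data-error
covariance `α C_e`, i.e. it adds `α⁻¹ Hᵀ C_e⁻¹ H` to the precision matrix. After `N_a` steps the
precision is `C_0⁻¹ + (∑ α_k⁻¹) Hᵀ C_e⁻¹ H = C_0⁻¹ + Hᵀ C_e⁻¹ H`, and Woodbury once more turns this
back into the single Kalman update with `C_e`.
-/

open Matrix Finset

namespace Matrix

variable {n m : Type*} [Fintype n] [Fintype m] [DecidableEq n] [DecidableEq m]

theorem inv_add_mul_inv_mul_eq_sub {K : Type*} [CommRing K] {C : Matrix n n K}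
    {R : Matrix m m K} (U : Matrix n m K) (V : Matrix m n K) (hC : IsUnit C) (hR : IsUnit R)
    (hS : IsUnit (V * C * U + R)) :
    (C⁻¹ + U * R⁻¹ * V)⁻¹ = C - C * U * (V * C * U + R)⁻¹ * V * C := by
  have hCC : C⁻¹⁻¹ = C := nonsing_inv_nonsing_inv C ((isUnit_iff_isUnit_det C).mp hC)
  have hRR : R⁻¹⁻¹ = R := nonsing_inv_nonsing_inv R ((isUnit_iff_isUnit_det R).mp hR)
  rw [add_mul_mul_inv_eq_sub C⁻¹ U R⁻¹ V (isUnit_nonsing_inv_iff.mpr hC)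
    (isUnit_nonsing_inv_iff.mpr hR), hCC, hRR, add_comm]
  · rwa [hCC, hRR, add_comm]

theorem inv_smul_of_ne_zero {K : Type*} [Field K] {A : Matrix n n K} (hA : IsUnit A) {a : K}
    (ha : a ≠ 0) : (a • A)⁻¹ = a⁻¹ • A⁻¹ :=
  inv_smul' A (Units.mk0 a ha) ((isUnit_iff_isUnit_det A).mp hA)

omit [DecidableEq n] [DecidableEq m] in
theorem PosSemidef.transpose_mul_mul_same {R : Matrix m m ℝ} (hR : R.PosSemidef)
    (H : Matrix m n ℝ) : (Hᵀ * R * H).PosSemidef := by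
  simpa using hR.conjTranspose_mul_mul_same H

theorem PosDef.inv_add_smul_posSemidef {C M : Matrix n n ℝ} (hC : C.PosDef) (hM : M.PosSemidef)
    {s : ℝ} (hs : 0 ≤ s) : (C⁻¹ + s • M).PosDef :=
  hC.inv.add_posSemidef (hM.smul hs)

theorem PosDef.sub_mul_inv_add_smul_mul_eq_inv {C : Matrix n n ℝ} (hC : C.PosDef)
    {R : Matrix m m ℝ} (hR : R.PosDef) (H : Matrix m n ℝ) {a : ℝ} (ha : 0 < a) :
    C - C * Hᵀ * (H * C * Hᵀ + a • R)⁻¹ * H * C = (C⁻¹ + a⁻¹ • (Hᵀ * R⁻¹ * H))⁻¹ := by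
  have hS : (H * C * Hᵀ + a • R).PosDef := by
    simpa using PosDef.posSemidef_add (hC.posSemidef.mul_mul_conjTranspose_same H) (hR.smul ha)
  rw [← inv_add_mul_inv_mul_eq_sub Hᵀ H hC.isUnit (hR.smul ha).isUnit hS.isUnit,
    inv_smul_of_ne_zero hR.isUnit ha.ne', Matrix.mul_smul, Matrix.smul_mul]

end Matrix

theorem esmda_covariance_eq_inv {n m : Type*} [Fintype n] [Fintype m] [DecidableEq n]
    [DecidableEq m] {R : Matrix m m ℝ} (hR : R.PosDef) (H : Matrix m n ℝ) {α : ℕ → ℝ}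
    {C : ℕ → Matrix n n ℝ} (hC0 : (C 0).PosDef) (k : ℕ) (hα : ∀ j < k, 0 < α j)
    (hrec : ∀ j < k, C (j + 1) = C j - C j * Hᵀ * (H * C j * Hᵀ + α j • R)⁻¹ * H * C j) :
    (C k).PosDef ∧ C k = ((C 0)⁻¹ + (∑ j ∈ range k, (α j)⁻¹) • (Hᵀ * R⁻¹ * H))⁻¹ := by
  induction k with
  | zero => simpa [nonsing_inv_nonsing_inv _ ((isUnit_iff_isUnit_det _).mp hC0.isUnit)]
  | succ k ih =>
    obtain ⟨hCk_pos, hCk⟩ := ih (fun j hj => hα j (by omega)) (fun j hj => hrec j (by omega))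
    have hαk := hα k k.lt_succ_self
    have hstep := hrec k k.lt_succ_self
    rw [hCk_pos.sub_mul_inv_add_smul_mul_eq_inv hR H hαk] at hstep
    refine ⟨hstep ▸ (hCk_pos.inv_add_smul_posSemidef
      (hR.inv.posSemidef.transpose_mul_mul_same H) (inv_pos.mpr hαk).le).inv, ?_⟩
    have hP : IsUnit ((C 0)⁻¹ + (∑ j ∈ range k, (α j)⁻¹) • (Hᵀ * R⁻¹ * H)) :=
      isUnit_nonsing_inv_iff.mp (hCk ▸ hCk_pos.isUnit)
    rw [hstep, hCk, nonsing_inv_nonsing_inv _ ((isUnit_iff_isUnit_det _).mp hP),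
      sum_range_succ, add_smul, add_assoc]

/-- `N_a` ES-MDA covariance updates with inflation coefficients `α_k` satisfying
`∑ α_k⁻¹ = 1` keep the covariance symmetric positive definite and reproduce exactly
the single Kalman (linear-Gaussian Bayesian) covariance update with the uninflated `C_e`. -/
theorem esmda_covariance_equals_single_update {n m Na : ℕ}
    (Ce : Matrix (Fin m) (Fin m) ℝ) (hCe : Ce.PosDef)
    (H : Matrix (Fin m) (Fin n) ℝ)
    (α : Fin Na → ℝ) (hα : ∀ k, 0 < α k) (hsum : ∑ k, (α k)⁻¹ = 1)
    (C : ℕ → Matrix (Fin n) (Fin n) ℝ) (hC0 : (C 0).PosDef)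
    (hrec : ∀ k : Fin Na,
      C ((k : ℕ) + 1) = C (k : ℕ) -
        C (k : ℕ) * Hᵀ * (H * C (k : ℕ) * Hᵀ + α k • Ce)⁻¹ * H * C (k : ℕ)) :
    (∀ k ≤ Na, (C k).PosDef) ∧
    C Na = ((C 0)⁻¹ + Hᵀ * Ce⁻¹ * H)⁻¹ ∧
    C Na = C 0 - C 0 * Hᵀ * (H * C 0 * Hᵀ + Ce)⁻¹ * H * C 0 := by
  set β : ℕ → ℝ := fun j => if h : j < Na then α ⟨j, h⟩ else 1
  have hβ : ∀ j < Na, 0 < β j := fun j hj => by simpa [β, hj] using hα ⟨j, hj⟩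
  have hβsum : ∑ j ∈ range Na, (β j)⁻¹ = 1 := by
    rw [← Fin.sum_univ_eq_sum_range]
    simpa [β] using hsum
  have hC := fun k (hk : k ≤ Na) => esmda_covariance_eq_inv hCe H hC0 k
    (fun j hj => hβ j (by omega))
    (fun j hj => by simpa [β, show j < Na by omega] using hrec ⟨j, by omega⟩)
  have hCNa : C Na = ((C 0)⁻¹ + Hᵀ * Ce⁻¹ * H)⁻¹ := by rw [(hC Na le_rfl).2, hβsum, one_smul]
  refine ⟨fun k hk => (hC k hk).1, hCNa, ?_⟩
  simpa [hCNa] using (hC0.sub_mul_inv_add_smul_mul_eq_inv hCe H one_pos).symm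
end

section
/- Let C_0 ∈ ℝ^{n×n} and C_e ∈ ℝ^{m×m} be symmetric positive definite, H ∈ ℝ^{m×n}, d ∈ ℝ^m, m_0 ∈ ℝ^n, and let α_1, …, α_{N_a} > 0 satisfy Σ_{k=1}^{N_a} α_k^{−1} = 1. Define recursively, for k = 1, …, N_a: K_k = C_{k−1} Hᵀ (H C_{k−1} Hᵀ + α_k C_e)^{−1}, m_k = m_{k−1} + K_k (d − H m_{k−1}), and C_k = C_{k−1} − K_k H C_{k−1}. Then m_{N_a} = m_0 + C_0 Hᵀ (H C_0 Hᵀ + C_e)^{−1} (d − H m_0) = (C_0^{−1} + Hᵀ C_e^{−1} H)^{−1} (C_0^{−1} m_0 + Hᵀ C_e^{−1} d); that is, the N_a multiple-data-assimilation mean updates with inflation coefficients α_k summing inversely to one reproduce exactly the posterior mean of a single linear-Gaussian Bayesian update with data d and data-error covariance C_e. -/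
/-!
In information form the Kalman update is additive: assimilating `d` with noise covariance `R`
adds `Hᵀ R⁻¹ H` to the precision `C⁻¹` and `Hᵀ R⁻¹ d` to the information vector `C⁻¹ m`.
Hence `N_a` ES-MDA steps with covariances `α_k C_e` add `(∑ α_k⁻¹) Hᵀ C_e⁻¹ H = Hᵀ C_e⁻¹ H` and
`Hᵀ C_e⁻¹ d`, exactly what a single update with `C_e` adds.
-/

open Matrix

theorem Fin.partialSum_last {M : Type*} [AddCommMonoid M] {n : ℕ} (f : Fin n → M) :
    Fin.partialSum f (Fin.last n) = ∑ i, f i := by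
  rw [Fin.partialSum, Fin.val_last, List.take_of_length_le (by simp), List.sum_ofFn]

namespace Matrix

variable {ι κ : Type*} [Fintype ι] [Fintype κ]

section KalmanUpdate

variable {𝕜 : Type*} [CommRing 𝕜] [DecidableEq ι] [DecidableEq κ]

noncomputable def kalmanGain (C : Matrix ι ι 𝕜) (H : Matrix κ ι 𝕜) (R : Matrix κ κ 𝕜) :
    Matrix ι κ 𝕜 :=
  C * Hᵀ * (H * C * Hᵀ + R)⁻¹

noncomputable def kalmanCov (C : Matrix ι ι 𝕜) (H : Matrix κ ι 𝕜) (R : Matrix κ κ 𝕜) :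
    Matrix ι ι 𝕜 :=
  C - kalmanGain C H R * H * C

noncomputable def kalmanMean (C : Matrix ι ι 𝕜) (H : Matrix κ ι 𝕜) (R : Matrix κ κ 𝕜)
    (μ : ι → 𝕜) (d : κ → 𝕜) : ι → 𝕜 :=
  μ + kalmanGain C H R *ᵥ (d - H *ᵥ μ)

variable {C : Matrix ι ι 𝕜} {H : Matrix κ ι 𝕜} {R : Matrix κ κ 𝕜}

theorem inv_add_mul_mul_transpose (hC : IsUnit C.det) (hR : IsUnit R.det) :
    (C⁻¹ + Hᵀ * R⁻¹ * H) * (C * Hᵀ) = Hᵀ * R⁻¹ * (H * C * Hᵀ + R) := by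
  simp only [Matrix.add_mul, Matrix.mul_add, Matrix.mul_assoc,
    nonsing_inv_mul_cancel_left _ _ hC, nonsing_inv_mul _ hR, Matrix.mul_one]
  exact add_comm _ _

theorem inv_add_mul_kalmanGain (hC : IsUnit C.det) (hR : IsUnit R.det)
    (hS : IsUnit (H * C * Hᵀ + R).det) :
    (C⁻¹ + Hᵀ * R⁻¹ * H) * kalmanGain C H R = Hᵀ * R⁻¹ := by
  rw [kalmanGain, ← Matrix.mul_assoc, inv_add_mul_mul_transpose hC hR,
    mul_nonsing_inv_cancel_right _ _ hS]

theorem inv_add_mul_kalmanCov (hC : IsUnit C.det) (hR : IsUnit R.det)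
    (hS : IsUnit (H * C * Hᵀ + R).det) :
    (C⁻¹ + Hᵀ * R⁻¹ * H) * kalmanCov C H R = 1 := by
  have hgain : (C⁻¹ + Hᵀ * R⁻¹ * H) * (kalmanGain C H R * H * C) = Hᵀ * R⁻¹ * H * C := by
    rw [Matrix.mul_assoc _ H, ← Matrix.mul_assoc _ (kalmanGain C H R),
      inv_add_mul_kalmanGain hC hR hS, ← Matrix.mul_assoc]
  rw [kalmanCov, Matrix.mul_sub, hgain, Matrix.add_mul, nonsing_inv_mul _ hC,
    add_sub_cancel_right]

theorem kalmanCov_eq_inv (hC : IsUnit C.det) (hR : IsUnit R.det)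
    (hS : IsUnit (H * C * Hᵀ + R).det) :
    kalmanCov C H R = (C⁻¹ + Hᵀ * R⁻¹ * H)⁻¹ :=
  (inv_eq_right_inv (inv_add_mul_kalmanCov hC hR hS)).symm

theorem inv_kalmanCov (hC : IsUnit C.det) (hR : IsUnit R.det)
    (hS : IsUnit (H * C * Hᵀ + R).det) :
    (kalmanCov C H R)⁻¹ = C⁻¹ + Hᵀ * R⁻¹ * H :=
  inv_eq_left_inv (inv_add_mul_kalmanCov hC hR hS)

theorem kalmanGain_eq_kalmanCov_mul (hC : IsUnit C.det) (hR : IsUnit R.det)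
    (hS : IsUnit (H * C * Hᵀ + R).det) :
    kalmanGain C H R = kalmanCov C H R * Hᵀ * R⁻¹ := by
  have hP := isUnit_det_of_right_inverse (inv_add_mul_kalmanCov hC hR hS)
  calc kalmanGain C H R
      = (C⁻¹ + Hᵀ * R⁻¹ * H)⁻¹ * ((C⁻¹ + Hᵀ * R⁻¹ * H) * kalmanGain C H R) :=
        (nonsing_inv_mul_cancel_left _ _ hP).symm
    _ = kalmanCov C H R * Hᵀ * R⁻¹ := by
        rw [inv_add_mul_kalmanGain hC hR hS, kalmanCov_eq_inv hC hR hS, ← Matrix.mul_assoc]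

theorem kalmanCov_mul_inv (hC : IsUnit C.det) :
    kalmanCov C H R * C⁻¹ = 1 - kalmanGain C H R * H := by
  rw [kalmanCov, Matrix.sub_mul, mul_nonsing_inv _ hC, mul_nonsing_inv_cancel_right _ _ hC]

theorem kalmanMean_eq (hC : IsUnit C.det) (hR : IsUnit R.det)
    (hS : IsUnit (H * C * Hᵀ + R).det) (μ : ι → 𝕜) (d : κ → 𝕜) :
    kalmanMean C H R μ d = kalmanCov C H R *ᵥ (C⁻¹ *ᵥ μ + (Hᵀ * R⁻¹) *ᵥ d) := by
  rw [mulVec_add, mulVec_mulVec, mulVec_mulVec, kalmanCov_mul_inv hC, ← Matrix.mul_assoc,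
    ← kalmanGain_eq_kalmanCov_mul hC hR hS, kalmanMean, mulVec_sub, sub_mulVec, one_mulVec,
    mulVec_mulVec]
  abel

theorem inv_kalmanCov_mulVec_kalmanMean (hC : IsUnit C.det) (hR : IsUnit R.det)
    (hS : IsUnit (H * C * Hᵀ + R).det) (μ : ι → 𝕜) (d : κ → 𝕜) :
    (kalmanCov C H R)⁻¹ *ᵥ kalmanMean C H R μ d = C⁻¹ *ᵥ μ + (Hᵀ * R⁻¹) *ᵥ d := by
  have hP := isUnit_det_of_left_inverse (inv_add_mul_kalmanCov hC hR hS)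
  rw [kalmanMean_eq hC hR hS, mulVec_mulVec, nonsing_inv_mul _ hP, one_mulVec]

end KalmanUpdate

section PosDef

variable {C : Matrix ι ι ℝ} {H : Matrix κ ι ℝ} {R : Matrix κ κ ℝ}

theorem PosDef.mul_mul_transpose_add (hC : C.PosDef) (hR : R.PosDef) :
    (H * C * Hᵀ + R).PosDef := by
  simpa [conjTranspose_eq_transpose_of_trivial] using
    hR.posSemidef_add (hC.posSemidef.mul_mul_conjTranspose_same H)

variable [DecidableEq ι] [DecidableEq κ]

theorem PosDef.inv_add_transpose_mul_inv_mul (hC : C.PosDef) (hR : R.PosDef) :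
    (C⁻¹ + Hᵀ * R⁻¹ * H).PosDef := by
  simpa [conjTranspose_eq_transpose_of_trivial] using
    hC.inv.add_posSemidef (hR.inv.posSemidef.conjTranspose_mul_mul_same H)

theorem PosDef.kalmanCov (hC : C.PosDef) (hR : R.PosDef) : (kalmanCov C H R).PosDef := by
  rw [kalmanCov_eq_inv hC.det_pos.ne'.isUnit hR.det_pos.ne'.isUnit
    (hC.mul_mul_transpose_add hR).det_pos.ne'.isUnit]
  exact (hC.inv_add_transpose_mul_inv_mul hR).inv

end PosDef

end Matrix

theorem kalman_sequential_information_form {ι κ : Type*} [Fintype ι] [DecidableEq ι]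
    [Fintype κ] [DecidableEq κ] {N : ℕ} {H : Matrix κ ι ℝ} {d : κ → ℝ}
    {R : Fin N → Matrix κ κ ℝ} (hR : ∀ k, (R k).PosDef)
    {C : ℕ → Matrix ι ι ℝ} {μ : ℕ → ι → ℝ} (hC0 : (C 0).PosDef)
    (hC : ∀ k : Fin N, C (k + 1) = kalmanCov (C k) H (R k))
    (hμ : ∀ k : Fin N, μ (k + 1) = kalmanMean (C k) H (R k) (μ k) d) (i : Fin (N + 1)) :
    (C i).PosDef ∧
      (C i)⁻¹ = (C 0)⁻¹ + Fin.partialSum (fun k ↦ Hᵀ * (R k)⁻¹ * H) i ∧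
      (C i)⁻¹ *ᵥ μ i = (C 0)⁻¹ *ᵥ μ 0 + Fin.partialSum (fun k ↦ (Hᵀ * (R k)⁻¹) *ᵥ d) i := by
  induction i using Fin.induction with
  | zero => simpa using hC0
  | succ k ih =>
    obtain ⟨hPD, hprec, hinfo⟩ := ih
    rw [Fin.val_castSucc] at hPD hprec hinfo
    have hCk := hPD.det_pos.ne'.isUnit
    have hRk := (hR k).det_pos.ne'.isUnit
    have hSk := (hPD.mul_mul_transpose_add (H := H) (hR k)).det_pos.ne'.isUnit
    rw [Fin.val_succ, Fin.partialSum_succ, Fin.partialSum_succ, hC k, hμ k,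
      inv_kalmanCov_mulVec_kalmanMean hCk hRk hSk, inv_kalmanCov hCk hRk hSk, hinfo, hprec,
      add_assoc, add_assoc]
    exact ⟨hPD.kalmanCov (hR k), rfl, rfl⟩

/-- `N_a` ES-MDA mean updates with inflation coefficients `α_k` satisfying `∑ α_k⁻¹ = 1`,
assimilating the same data `d` each time, reproduce exactly the posterior mean of a single
linear-Gaussian Bayesian update with data-error covariance `C_e`, in both the gain form and
the information form. -/
theorem esmda_mean_equals_single_update {n m Na : ℕ}
    (Ce : Matrix (Fin m) (Fin m) ℝ) (hCe : Ce.PosDef)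
    (H : Matrix (Fin m) (Fin n) ℝ) (d : Fin m → ℝ)
    (α : Fin Na → ℝ) (hα : ∀ k, 0 < α k) (hsum : ∑ k, (α k)⁻¹ = 1)
    (C : ℕ → Matrix (Fin n) (Fin n) ℝ) (μ : ℕ → Fin n → ℝ)
    (hC0 : (C 0).PosDef)
    (hrecμ : ∀ k : Fin Na,
      μ ((k : ℕ) + 1) = μ (k : ℕ) +
        (C (k : ℕ) * Hᵀ * (H * C (k : ℕ) * Hᵀ + α k • Ce)⁻¹).mulVec
          (d - H.mulVec (μ (k : ℕ))))
    (hrecC : ∀ k : Fin Na,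
      C ((k : ℕ) + 1) = C (k : ℕ) -
        (C (k : ℕ) * Hᵀ * (H * C (k : ℕ) * Hᵀ + α k • Ce)⁻¹) * H * C (k : ℕ)) :
    μ Na = μ 0 + (C 0 * Hᵀ * (H * C 0 * Hᵀ + Ce)⁻¹).mulVec (d - H.mulVec (μ 0)) ∧
    μ Na = (((C 0)⁻¹ + Hᵀ * Ce⁻¹ * H)⁻¹).mulVec
        ((C 0)⁻¹.mulVec (μ 0) + (Hᵀ * Ce⁻¹).mulVec d) := by
  obtain ⟨hPD, hprec, hinfo⟩ := kalman_sequential_information_form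
    (fun k ↦ hCe.smul (hα k)) hC0 hrecC hrecμ (Fin.last Na)
  have hweight k : Hᵀ * (α k • Ce)⁻¹ = (α k)⁻¹ • (Hᵀ * Ce⁻¹) := by
    let := invertibleOfNonzero (hα k).ne'
    rw [inv_smul Ce (α k) hCe.det_pos.ne'.isUnit, invOf_eq_inv, Matrix.mul_smul]
  simp only [Fin.val_last, Fin.partialSum_last, hweight, smul_mul, smul_mulVec,
    ← Finset.sum_smul, hsum, one_smul] at hPD hprec hinfo
  have hμ : μ Na = ((C 0)⁻¹ + Hᵀ * Ce⁻¹ * H)⁻¹ *ᵥ ((C 0)⁻¹ *ᵥ μ 0 + (Hᵀ * Ce⁻¹) *ᵥ d) := by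
    rw [← hprec, ← hinfo, mulVec_mulVec, nonsing_inv_mul _ hPD.inv.det_pos.ne'.isUnit,
      one_mulVec]
  refine ⟨hμ.trans ?_, hμ⟩
  have hC0u := hC0.det_pos.ne'.isUnit
  have hCeu := hCe.det_pos.ne'.isUnit
  have hSu := (hC0.mul_mul_transpose_add (H := H) hCe).det_pos.ne'.isUnit
  rw [← kalmanCov_eq_inv hC0u hCeu hSu, ← kalmanMean_eq hC0u hCeu hSu]
  rfl
end
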